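/- Let v : ℝ₋ᵏ → ℝ₋ be convex and increasing in each variable, and let A_i = liminf_{t_i→−∞} v(t)/t_i. Then for all t, t* ∈ ℝ₋ᵏ with t_i ≤ t_i* for all i, one has v(t) − v(t*) ≤ Σ_i A_i (t_i − t_i*). -/

import Mathlib

open Filter Topology MeasureTheory

noncomputable section

/-- `ℂⁿ`. -/
abbrev Cn (n : ℕ) := Fin n → ℂ

/-- Plurisubharmonicity on a set: upper semicontinuity together with the
sub-mean value inequality over circles lying in complex lines inside the set. -/
def PSHOn {n : ℕ} (u : Cn n → ℝ) (D : Set (Cn n)) : Prop :=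
  UpperSemicontinuousOn u D ∧
    ∀ z w : Cn n, ∀ r : ℝ, 0 < r →
      (∀ ζ : ℂ, ‖ζ‖ ≤ r → z + ζ • w ∈ D) →
      u z ≤ (2 * Real.pi)⁻¹ *
        ∫ θ in (0:ℝ)..2 * Real.pi, u (z + ((r : ℂ) * Complex.exp (θ * Complex.I)) • w)

/-- Maximality on an open set: `u` dominates every plurisubharmonic competitor on
relatively compact subdomains, given boundary comparison. -/
def MaximalOn {n : ℕ} (u : Cn n → ℝ) (Ω : Set (Cn n)) : Prop :=
  ∀ G : Set (Cn n), IsOpen G → IsCompact (closure G) → closure G ⊆ Ω →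
    ∀ v : Cn n → ℝ, PSHOn v G →
      (∀ p ∈ frontier G, limsup v (𝓝[G] p) ≤ u p) →
      ∀ z ∈ G, v z ≤ u z

/-- The relative type `σ(u,φ) = liminf_{z→x} u(z)/φ(z)`. -/
def relType {n : ℕ} (x : Cn n) (u φ : Cn n → ℝ) : ℝ :=
  liminf (fun z => u z / φ z) (𝓝[≠] x)

/-- Boundedness near `x` (off `x`). -/
def BddNear {n : ℕ} (x : Cn n) (f : Cn n → ℝ) : Prop :=
  ∃ U ∈ 𝓝 x, ∃ C : ℝ, ∀ z ∈ U, z ≠ x → |f z| ≤ C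

/-- `u ≤ v + O(1)` near `x`. -/
def LeO1 {n : ℕ} (x : Cn n) (u v : Cn n → ℝ) : Prop :=
  ∃ U ∈ 𝓝 x, ∃ C : ℝ, ∀ z ∈ U, z ≠ x → u z ≤ v z + C

/-- `u = v + O(1)` near `x`. -/
def EqO1 {n : ℕ} (x : Cn n) (u v : Cn n → ℝ) : Prop :=
  LeO1 x u v ∧ LeO1 x v u

/-- A weight at `x`: plurisubharmonic near `x` and singular at `x`. -/
def IsWeight {n : ℕ} (x : Cn n) (φ : Cn n → ℝ) : Prop :=
  ∃ U ∈ 𝓝 x, PSHOn φ (U \ {x}) ∧ Tendsto φ (𝓝[≠] x) atBot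

/-- A maximal weight at `x`. -/
def IsMaxWeight {n : ℕ} (x : Cn n) (φ : Cn n → ℝ) : Prop :=
  ∃ U ∈ 𝓝 x, PSHOn φ (U \ {x}) ∧ MaximalOn φ (U \ {x}) ∧ Tendsto φ (𝓝[≠] x) atBot

/-- Local boundedness on a set. -/
def LocBddOn {n : ℕ} (u : Cn n → ℝ) (S : Set (Cn n)) : Prop :=
  ∀ z ∈ S, ∃ U ∈ 𝓝 z, ∃ C : ℝ, ∀ w ∈ U ∩ S, |u w| ≤ C

/-- Analytic singularity: `φ = c·log|F| + O(1)` with `F` holomorphic having an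
isolated zero at `x`. -/
def HasAnalyticSing {n : ℕ} (x : Cn n) (φ : Cn n → ℝ) : Prop :=
  ∃ c : ℝ, 0 < c ∧ ∃ (N : ℕ) (F : Cn n → Fin N → ℂ), ∃ U ∈ 𝓝 x,
    DifferentiableOn ℂ F U ∧ F x = 0 ∧ (∀ z ∈ U, z ≠ x → F z ≠ 0) ∧
    BddNear x (fun z => φ z - c * Real.log ‖F z‖)

/-- Asymptotically analytic singularity: approximation by analytic weights in the
sense `(1+ε)ψ_ε + O(1) ≤ ψ ≤ (1−ε)ψ_ε + O(1)`. -/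
def AsympAnalytic {n : ℕ} (x : Cn n) (ψ : Cn n → ℝ) : Prop :=
  ∀ ε : ℝ, 0 < ε → ∃ φ : Cn n → ℝ, IsWeight x φ ∧ HasAnalyticSing x φ ∧
    LeO1 x (fun z => (1 + ε) * φ z) ψ ∧ LeO1 x ψ (fun z => (1 - ε) * φ z)

/-- A bounded hyperconvex domain. -/
def Hyperconvex {n : ℕ} (D : Set (Cn n)) : Prop :=
  IsOpen D ∧ Bornology.IsBounded D ∧ D.Nonempty ∧
    ∃ ρ : Cn n → ℝ, PSHOn ρ D ∧ ContinuousOn ρ D ∧ (∀ z ∈ D, ρ z < 0) ∧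
      ∀ c : ℝ, c < 0 → IsCompact (closure {z ∈ D | ρ z ≤ c}) ∧
        closure {z ∈ D | ρ z ≤ c} ⊆ D

/-- Zero boundary values. -/
def ZeroOnBoundary {n : ℕ} (D : Set (Cn n)) (u : Cn n → ℝ) : Prop :=
  ∀ p ∈ frontier D, Tendsto u (𝓝[D] p) (𝓝 0)

/-- The Green–Zahariuta function of `D` with singularity `φ` at `x`. -/
def Green {n : ℕ} (D : Set (Cn n)) (x : Cn n) (φ : Cn n → ℝ) (z : Cn n) : ℝ :=
  sSup {t : ℝ | ∃ v : Cn n → ℝ, PSHOn v D ∧ (∀ w ∈ D, v w ≤ 0) ∧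
    1 ≤ relType x v φ ∧ t = v z}

/-- The complete greenification of `ψ` at `x` in `D`. -/
def greenification {n : ℕ} (D : Set (Cn n)) (x : Cn n) (ψ : Cn n → ℝ) (z : Cn n) : ℝ :=
  limsup (fun y => sSup {t : ℝ | ∃ v : Cn n → ℝ, PSHOn v D ∧ (∀ w ∈ D, v w ≤ 0) ∧
    LeO1 x v ψ ∧ t = v y}) (𝓝 z)

/-- Demailly's approximation `𝔇_k u`. -/
def Demailly {n : ℕ} (D : Set (Cn n)) (k : ℕ) (u : Cn n → ℝ) (z : Cn n) : ℝ :=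
  (k : ℝ)⁻¹ * sSup {t : ℝ | ∃ f : Cn n → ℂ, DifferentiableOn ℂ f D ∧
    (∫⁻ w in D, ENNReal.ofReal (‖f w‖ ^ 2 * Real.exp (-2 * k * u w))) < 1 ∧
    t = Real.log ‖f z‖}

/-- An abstract complex Monge–Ampère operator with the standard properties used in the
paper: characterization of maximality, the comparison principle, and continuity of the
residual masses along monotone sequences. -/
structure MAData (n : ℕ) where
  ma : (Cn n → ℝ) → Measure (Cn n)
  max_iff : ∀ (u : Cn n → ℝ) (Ω : Set (Cn n)), IsOpen Ω → PSHOn u Ω →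
      (MaximalOn u Ω ↔ ma u Ω = 0)
  comparison : ∀ (D : Set (Cn n)) (u v : Cn n → ℝ), IsOpen D →
      Bornology.IsBounded D → PSHOn u D → PSHOn v D →
      closure {z ∈ D | u z < v z} ⊆ D →
      ma v {z ∈ D | u z < v z} ≤ ma u {z ∈ D | u z < v z}
  cont_dec : ∀ (D : Set (Cn n)) (x : Cn n) (u : ℕ → Cn n → ℝ) (v : Cn n → ℝ),
      IsOpen D → x ∈ D → (∀ j, PSHOn (u j) (D \ {x})) → PSHOn v (D \ {x}) →
      (∀ j z, u (j + 1) z ≤ u j z) →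
      (∀ z ∈ D \ {x}, Tendsto (fun j => u j z) atTop (𝓝 (v z))) →
      Tendsto (fun j => ma (u j) {x}) atTop (𝓝 (ma v {x}))
  cont_inc : ∀ (D : Set (Cn n)) (x : Cn n) (u : ℕ → Cn n → ℝ) (v : Cn n → ℝ),
      IsOpen D → x ∈ D → (∀ j, PSHOn (u j) (D \ {x})) → PSHOn v (D \ {x}) →
      (∀ j z, u j z ≤ u (j + 1) z) →
      (∀ z ∈ D \ {x}, limsup (fun y => ⨆ j, u j y) (𝓝 z) = v z) →
      Tendsto (fun j => ma (u j) {x}) atTop (𝓝 (ma v {x}))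


/-! Move from `t*` to `t` one coordinate at a time, so that the difference telescopes into
one-variable steps. On the ray `s ↦ update u i s`, convexity keeps `v` above the chord through
`s = a` and `s = u i` for all `s < a`; dividing by `s < 0`, `v / tᵢ` is eventually below a function
tending to the slope of that chord, so `Aᵢ` is at most this slope, and multiplying by
`a - u i ≤ 0` gives the step. As `v < 0`, the ratio `v / tᵢ` is nonnegative, so its `liminf` is a
genuine one and not the junk value `0` of an unbounded one. -/

open Set Function

abbrev negOrthant (ι : Type*) : Set (ι → ℝ) := {t | ∀ j, t j < 0}

section

variable {ι : Type*} [DecidableEq ι]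

theorem Finset.sub_le_sum_of_update_piecewise [Fintype ι] {α β : Type*} [AddCommGroup β]
    [PartialOrder β] [IsOrderedAddMonoid β] (g : (ι → α) → β) (x y : ι → α) (c : ι → β)
    (h : ∀ s : Finset ι, ∀ i ∉ s,
      g (update (s.piecewise x y) i (x i)) - g (s.piecewise x y) ≤ c i) :
    g x - g y ≤ ∑ i, c i := by
  suffices key : ∀ s : Finset ι, g (s.piecewise x y) - g y ≤ ∑ i ∈ s, c i by
    simpa using key Finset.univ
  intro s
  induction s using Finset.induction with
  | empty => simp
  | insert i s hi ih =>
    rw [Finset.piecewise_insert, Finset.sum_insert hi]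
    calc g (update (s.piecewise x y) i (x i)) - g y
        = (g (update (s.piecewise x y) i (x i)) - g (s.piecewise x y))
          + (g (s.piecewise x y) - g y) := by abel
      _ ≤ c i + ∑ j ∈ s, c j := add_le_add (h s i hi) ih

theorem ConvexOn.comp_update {𝕜 E β : Type*} [Semiring 𝕜] [PartialOrder 𝕜] [AddCommMonoid E]
    [Module 𝕜 E] [AddCommMonoid β] [PartialOrder β] [SMul 𝕜 β] {s : Set (ι → E)}
    {f : (ι → E) → β} (hf : ConvexOn 𝕜 s f) (y : ι → E) (i : ι) :
    ConvexOn 𝕜 (update y i ⁻¹' s) (fun x => f (update y i x)) := by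
  have combo : ∀ (x₁ x₂ : E) (a b : 𝕜), a + b = 1 →
      update y i (a • x₁ + b • x₂) = a • update y i x₁ + b • update y i x₂ := by
    intro x₁ x₂ a b hab
    rw [← update_smul, ← update_smul, ← update_add, Convex.combo_self hab]
  refine ⟨fun x₁ hx₁ x₂ hx₂ a b ha hb hab => ?_, fun x₁ hx₁ x₂ hx₂ a b ha hb hab => ?_⟩
  · rw [mem_preimage, combo x₁ x₂ a b hab]
    exact hf.1 hx₁ hx₂ ha hb hab
  · dsimp only
    rw [combo x₁ x₂ a b hab]
    exact hf.2 hx₁ hx₂ ha hb hab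

theorem ConvexOn.le_slope_of_eventually_le_div {f : ℝ → ℝ} {a b c : ℝ}
    (hf : ConvexOn ℝ (Iic c) f) (hac : a < c) (hb : ∀ᶠ s in atBot, b ≤ f s / s) :
    b ≤ slope f a c := by
  set D := slope f a c
  have chord_below : ∀ s < a, f c + D * (s - c) ≤ f s := by
    intro s hs
    have hsc : s - c < 0 := by linarith
    have secant := hf.secant_mono (a := c) self_mem_Iic (hs.le.trans hac.le) hac.le
      (by linarith) hac.ne hs.le
    have hD : (f a - f c) / (a - c) = D := by rw [← slope_def_field, slope_comm]
    rw [hD, div_le_iff_of_neg hsc] at secant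
    linarith
  have chord_div : Tendsto (fun s => (f c + D * (s - c)) / s) atBot (𝓝 D) := by
    have : Tendsto (fun s => D + (f c - D * c) / s) atBot (𝓝 (D + 0)) :=
      tendsto_const_nhds.add (tendsto_const_nhds.div_atBot tendsto_id)
    rw [add_zero] at this
    refine this.congr' ?_
    filter_upwards [eventually_lt_atBot 0] with s hs
    field_simp [hs.ne]
    ring
  refine ge_of_tendsto chord_div ?_
  filter_upwards [hb, eventually_lt_atBot (min a 0)] with s hb hs
  exact hb.trans (div_le_div_of_nonpos_of_le (hs.trans_le (min_le_right a 0)).le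
    (chord_below s (hs.trans_le (min_le_left a 0))))

theorem update_mem_negOrthant {u : ι → ℝ} (hu : u ∈ negOrthant ι) (i : ι) {s : ℝ}
    (hs : s < 0) : update u i s ∈ negOrthant ι := by
  intro j
  rcases eq_or_ne j i with rfl | hj
  · simpa using hs
  · simpa [hj] using hu j

theorem tendsto_update_atBot {u : ι → ℝ} (hu : u ∈ negOrthant ι) (i : ι) :
    Tendsto (fun s => update u i s) atBot (comap (fun t => t i) atBot ⊓ 𝓟 (negOrthant ι)) := by
  refine tendsto_inf.2 ⟨tendsto_comap_iff.2 ?_, tendsto_principal.2 ?_⟩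
  · simp only [Function.comp_def, update_self]
    exact tendsto_id
  · filter_upwards [eventually_lt_atBot 0] with s hs
    exact update_mem_negOrthant hu i hs

theorem ConvexOn.update_sub_le_liminf_mul {v : (ι → ℝ) → ℝ}
    (hconv : ConvexOn ℝ (negOrthant ι) v) (hneg : ∀ t ∈ negOrthant ι, v t < 0)
    {u : ι → ℝ} (hu : u ∈ negOrthant ι) (i : ι) {a : ℝ} (ha : a ≤ u i) :
    v (update u i a) - v u ≤
      liminf (fun t => v t / t i) (comap (fun t => t i) atBot ⊓ 𝓟 (negOrthant ι)) *
        (a - u i) := by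
  rcases ha.eq_or_lt with rfl | ha
  · simp
  set f := fun s => v (update u i s)
  have hf : ConvexOn ℝ (Iic (u i)) f :=
    (hconv.comp_update u i).subset (fun s hs => update_mem_negOrthant hu i (hs.trans_lt (hu i)))
      (convex_Iic _)
  have ratio_nonneg : ∀ᶠ t in comap (fun t => t i) atBot ⊓ 𝓟 (negOrthant ι),
      0 ≤ v t / t i := by
    filter_upwards [mem_inf_of_right (mem_principal_self _)] with t ht
    exact div_nonneg_of_nonpos (hneg t ht).le (ht i).le
  have liminf_le_slope : liminf (fun t => v t / t i)
      (comap (fun t => t i) atBot ⊓ 𝓟 (negOrthant ι)) ≤ slope f a (u i) :=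
    liminf_le_of_le (isBoundedUnder_of_eventually_ge ratio_nonneg) fun b hb =>
      hf.le_slope_of_eventually_le_div ha
        (by simpa [f] using (tendsto_update_atBot hu i).eventually hb)
  calc v (update u i a) - v u = slope f a (u i) * (a - u i) := by
        rw [slope_def_field, div_mul_eq_mul_div, eq_div_iff (sub_ne_zero.2 ha.ne')]
        simp only [f, update_eq_self]
        ring
    _ ≤ _ := mul_le_mul_of_nonpos_right liminf_le_slope (by linarith)

end

theorem convex_slope_bound_general (k : ℕ) (Ω : Set (Fin k → ℝ))
    (hΩ : Ω = {t : Fin k → ℝ | ∀ i, t i < 0})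
    (v : (Fin k → ℝ) → ℝ) (hconv : ConvexOn ℝ Ω v) (hneg : ∀ t ∈ Ω, v t < 0)
    (A : Fin k → ℝ)
    (hA : ∀ i, A i = liminf (fun t => v t / t i)
        ((Filter.comap (fun t => t i) atBot) ⊓ 𝓟 Ω)) :
    ∀ t ∈ Ω, ∀ tstar ∈ Ω, (∀ i, t i ≤ tstar i) →
      v t - v tstar ≤ ∑ i, A i * (t i - tstar i) := by
  subst hΩ
  intro t ht tstar htstar hle
  refine Finset.sub_le_sum_of_update_piecewise v t tstar _ fun s i hi => ?_
  have hu : s.piecewise t tstar ∈ negOrthant (Fin k) := fun j =>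
    s.piecewise_cases t tstar (· < 0) (ht j) (htstar j)
  have hui : s.piecewise t tstar i = tstar i := s.piecewise_eq_of_notMem _ _ hi
  rw [hA i, ← hui]
  exact hconv.update_sub_le_liminf_mul hneg hu i (hui ▸ hle i)

/-- with `A_i = liminf_{t_i→−∞} v(t)/t_i`, a negative convex function `v`
increasing in each variable satisfies `v(t) − v(t*) ≤ Σ_i A_i (t_i − t_i*)` whenever
`t_i ≤ t_i*` for all `i`. -/
theorem convex_slope_bound (k : ℕ) (hk : 0 < k) (Ω : Set (Fin k → ℝ))
    (hΩ : Ω = {t : Fin k → ℝ | ∀ i, t i < 0})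
    (v : (Fin k → ℝ) → ℝ) (hconv : ConvexOn ℝ Ω v) (hneg : ∀ t ∈ Ω, v t < 0)
    (hmono : ∀ t ∈ Ω, ∀ i : Fin k, ∀ s : ℝ, t i ≤ s → s < 0 →
      v t ≤ v (Function.update t i s))
    (A : Fin k → ℝ)
    (hA : ∀ i, A i = liminf (fun t => v t / t i)
        ((Filter.comap (fun t => t i) atBot) ⊓ 𝓟 Ω)) :
    ∀ t ∈ Ω, ∀ tstar ∈ Ω, (∀ i, t i ≤ tstar i) →
      v t - v tstar ≤ ∑ i, A i * (t i - tstar i) :=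
  convex_slope_bound_general k Ω hΩ v hconv hneg A hA

end
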